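/- arXiv:1508.00918 — 2 statements merged into one kernel-verified Lean document; each statement's English description precedes it below -/
import Mathlib

section
/- Let H be a real Hilbert space, a : H × H → ℝ a continuous bilinear form that is coercive (there exists α > 0 with a(v,v) ≥ α‖v‖² for all v), K ⊆ H a nonempty closed convex set, and f ∈ H. Then there exists a unique u ∈ K such that a(u, v - u) ≥ ⟪f, v - u⟫ for all v ∈ K. -/
open RealInnerProductSpace

section LSaux

variable {H : Type*} [NormedAddCommGroup H] [InnerProductSpace ℝ H] [CompleteSpace H]

/-- Existence of the projection characterized by the variational inequality. -/
theorem LS.exists_proj {K : Set H} (hne : K.Nonempty) (hcl : IsClosed K)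
    (hconv : Convex ℝ K) (x : H) :
    ∃ p, p ∈ K ∧ ∀ w ∈ K, ⟪x - p, w - p⟫ ≤ 0 := by
  obtain ⟨p, hpK, hp⟩ := exists_norm_eq_iInf_of_complete_convex hne hcl.isComplete hconv x
  exact ⟨p, hpK, (norm_eq_iInf_iff_real_inner_le_zero hconv hpK).mp hp⟩

/-- The projection variational inequality implies nonexpansiveness. -/
theorem LS.proj_dist {K : Set H} {x y p q : H} (hpK : p ∈ K) (hqK : q ∈ K)
    (hp : ∀ w ∈ K, ⟪x - p, w - p⟫ ≤ 0) (hq : ∀ w ∈ K, ⟪y - q, w - q⟫ ≤ 0) :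
    ‖p - q‖ ≤ ‖x - y‖ := by
  have h1 := hp q hqK
  have h2 := hq p hpK
  have key : ⟪p - q, p - q⟫ ≤ ⟪x - y, p - q⟫ := by
    have e1 : ⟪x - p, q - p⟫ = -⟪x - p, p - q⟫ := by
      rw [show q - p = -(p - q) by abel, inner_neg_right]
    have e2 : ⟪x - y, p - q⟫ = ⟪x - p, p - q⟫ - ⟪y - q, p - q⟫ + ⟪p - q, p - q⟫ := by
      rw [show x - y = (x - p) - (y - q) + (p - q) by abel, inner_add_left, inner_sub_left]
    linarith [h1, h2, e1, e2]
  rcases eq_or_ne p q with h | h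
  · simp [h]
  · have hpos : 0 < ‖p - q‖ := by simpa [sub_eq_zero] using h
    have hmul : ‖p - q‖ * ‖p - q‖ ≤ ‖x - y‖ * ‖p - q‖ := by
      calc ‖p - q‖ * ‖p - q‖ = ⟪p - q, p - q⟫ := (real_inner_self_eq_norm_mul_norm _).symm
        _ ≤ ⟪x - y, p - q⟫ := key
        _ ≤ ‖x - y‖ * ‖p - q‖ := real_inner_le_norm _ _
    exact le_of_mul_le_mul_right hmul hpos

end LSaux

/-- Lions–Stampacchia theorem: existence and uniqueness for variational inequalities. -/
theorem lions_stampacchia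
    {H : Type*} [NormedAddCommGroup H] [InnerProductSpace ℝ H] [CompleteSpace H]
    (a : H →L[ℝ] H →L[ℝ] ℝ) (α : ℝ) (hα : 0 < α)
    (hcoer : ∀ v : H, α * ‖v‖ ^ 2 ≤ a v v)
    (K : Set H) (hne : K.Nonempty) (hcl : IsClosed K) (hconv : Convex ℝ K)
    (f : H) :
    ∃! u : H, u ∈ K ∧ ∀ v ∈ K, ⟪f, v - u⟫ ≤ a u (v - u) := by
  -- The operator A with ⟪A v, w⟫ = a v w
  set A : H →L[ℝ] H :=
    ((InnerProductSpace.toDual ℝ H).symm.toContinuousLinearEquiv :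
      StrongDual ℝ H ≃L[ℝ] H).toContinuousLinearMap.comp a with hA
  have hAinner : ∀ v w : H, ⟪A v, w⟫ = a v w := by
    intro v w
    simp [hA, InnerProductSpace.toDual_symm_apply]
  -- constants
  set M : ℝ := max ‖A‖ α with hM
  have hMα : α ≤ M := le_max_right _ _
  have hM0 : 0 < M := lt_of_lt_of_le hα hMα
  have hAle : ∀ z : H, ‖A z‖ ≤ M * ‖z‖ := fun z =>
    (A.le_opNorm z).trans (by gcongr; exact le_max_left _ _)
  set ρ : ℝ := α / M ^ 2 with hρ
  have hρ0 : 0 < ρ := div_pos hα (by positivity)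
  -- contraction constant
  set k : ℝ := Real.sqrt (1 - α ^ 2 / M ^ 2) with hk
  have hfrac0 : 0 ≤ 1 - α ^ 2 / M ^ 2 := by
    rw [sub_nonneg, div_le_one (by positivity)]
    exact pow_le_pow_left₀ hα.le hMα 2
  have hfrac1 : 1 - α ^ 2 / M ^ 2 < 1 := by
    have : 0 < α ^ 2 / M ^ 2 := by positivity
    linarith
  have hknn : 0 ≤ k := Real.sqrt_nonneg _
  have hk1 : k < 1 := by
    calc k < Real.sqrt 1 := Real.sqrt_lt_sqrt hfrac0 hfrac1
      _ = 1 := Real.sqrt_one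
  -- the key estimate: ‖z - ρ • A z‖ ≤ k ‖z‖
  have key : ∀ z : H, ‖z - ρ • A z‖ ≤ k * ‖z‖ := by
    intro z
    have expand : ‖z - ρ • A z‖ ^ 2 = ‖z‖ ^ 2 - 2 * ρ * ⟪A z, z⟫ + ρ ^ 2 * ‖A z‖ ^ 2 := by
      rw [@norm_sub_sq_real, real_inner_smul_right, norm_smul]
      simp only [Real.norm_eq_abs, abs_of_nonneg hρ0.le, mul_pow]
      rw [real_inner_comm z (A z)]
      ring
    have h1 : α * ‖z‖ ^ 2 ≤ ⟪A z, z⟫ := by rw [hAinner]; exact hcoer z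
    have h2 : ‖A z‖ ^ 2 ≤ M ^ 2 * ‖z‖ ^ 2 := by
      calc ‖A z‖ ^ 2 ≤ (M * ‖z‖) ^ 2 := pow_le_pow_left₀ (norm_nonneg _) (hAle z) 2
        _ = M ^ 2 * ‖z‖ ^ 2 := by ring
    have hsq : ‖z - ρ • A z‖ ^ 2 ≤ (k * ‖z‖) ^ 2 := by
      have hks : (k * ‖z‖) ^ 2 = (1 - α ^ 2 / M ^ 2) * ‖z‖ ^ 2 := by
        rw [mul_pow, hk, Real.sq_sqrt hfrac0]
      rw [hks, expand]
      have e : (1 - α ^ 2 / M ^ 2) * ‖z‖ ^ 2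
          = (1 - 2 * ρ * α + ρ ^ 2 * M ^ 2) * ‖z‖ ^ 2 := by
        rw [hρ]; field_simp; ring
      rw [e]
      nlinarith [mul_le_mul_of_nonneg_left h1 (by positivity : (0:ℝ) ≤ 2 * ρ),
        mul_le_mul_of_nonneg_left h2 (by positivity : (0:ℝ) ≤ ρ ^ 2)]
    exact nonneg_le_nonneg_of_sq_le_sq (by positivity) (by simpa [pow_two] using hsq)
  -- the projection map
  let P : H → H := fun x => Classical.choose (LS.exists_proj hne hcl hconv x)
  have hPK : ∀ x, P x ∈ K := fun x => (Classical.choose_spec (LS.exists_proj hne hcl hconv x)).1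
  have hPvi : ∀ x, ∀ w ∈ K, ⟪x - P x, w - P x⟫ ≤ 0 := fun x =>
    (Classical.choose_spec (LS.exists_proj hne hcl hconv x)).2
  -- the contraction
  let T : H → H := fun x => P (x - ρ • (A x - f))
  have hT : LipschitzWith (⟨k, hknn⟩ : NNReal) T := by
    apply LipschitzWith.of_dist_le_mul
    intro x y
    rw [dist_eq_norm, dist_eq_norm]
    calc ‖T x - T y‖ ≤ ‖(x - ρ • (A x - f)) - (y - ρ • (A y - f))‖ :=
          LS.proj_dist (hPK _) (hPK _) (hPvi _) (hPvi _)
      _ = ‖(x - y) - ρ • A (x - y)‖ := by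
          rw [map_sub A x y]
          congr 1
          rw [smul_sub, smul_sub, smul_sub]
          abel
      _ ≤ k * ‖x - y‖ := key _
  have hcontr : ContractingWith (⟨k, hknn⟩ : NNReal) T :=
    ⟨by exact_mod_cast hk1, hT⟩
  have : Nonempty H := ⟨0⟩
  obtain ⟨u, hu⟩ : ∃ u, Function.IsFixedPt T u :=
    ⟨hcontr.fixedPoint T, hcontr.fixedPoint_isFixedPt⟩
  -- the fixed point solves the variational inequality
  have huK : u ∈ K := hu ▸ hPK _
  have hVI : ∀ v ∈ K, ⟪f, v - u⟫ ≤ a u (v - u) := by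
    intro v hv
    have h := hPvi (u - ρ • (A u - f)) v hv
    rw [show P (u - ρ • (A u - f)) = u from hu] at h
    have h' : ⟪ρ • (f - A u), v - u⟫ ≤ 0 := by
      have e : u - ρ • (A u - f) - u = ρ • (f - A u) := by
        rw [smul_sub, smul_sub]; abel
      rwa [e] at h
    rw [real_inner_smul_left, inner_sub_left] at h'
    have h'' : ⟪f, v - u⟫ - ⟪A u, v - u⟫ ≤ 0 := by nlinarith [h', hρ0]
    rw [hAinner] at h''
    linarith
  -- uniqueness
  refine ⟨u, ⟨huK, hVI⟩, ?_⟩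
  rintro y ⟨hyK, hyVI⟩
  have h1 := hyVI u huK
  have h2 := hVI y hyK
  have e1 : (a y) (u - y) = -(a y) (y - u) := by
    rw [show u - y = -(y - u) by abel, map_neg]
  have e2 : (a u) (y - u) - (a y) (y - u) = -((a (y - u)) (y - u)) := by
    rw [map_sub a y u]
    simp only [ContinuousLinearMap.sub_apply]
    ring
  have e3 : ⟪f, u - y⟫ = -⟪f, y - u⟫ := by
    rw [show u - y = -(y - u) by abel, inner_neg_right]
  have hc := hcoer (y - u)
  have hnorm : ‖y - u‖ ^ 2 ≤ 0 := by nlinarith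
  have : y - u = 0 := by
    have : ‖y - u‖ = 0 := by nlinarith [norm_nonneg (y - u)]
    simpa using this
  have := sub_eq_zero.mp this
  exact this
end

section
/- Let H be a real Hilbert space, a a continuous coercive bilinear form with coercivity constant α and continuity constant M, and K ⊆ H nonempty closed convex. For f ∈ H and ρ with 0 < ρ < 2α/M², the map T : K → K defined by T(v) = P_K(v - ρ(A v - f)), where A is the bounded operator with a(u,v) = ⟪A u, v⟫ and P_K is the projection onto K, is a strict contraction on K. -/
open RealInnerProductSpace

/-- Variational characterization of the projection. -/
lemma proj_var_ineq {H : Type*} [NormedAddCommGroup H] [InnerProductSpace ℝ H]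
    (K : Set H) (hne : K.Nonempty) (hconv : Convex ℝ K)
    (P : H → H) (hP : ∀ f : H, P f ∈ K ∧ ∀ v ∈ K, ‖P f - f‖ ≤ ‖v - f‖)
    (f : H) : ∀ w ∈ K, ⟪f - P f, w - P f⟫ ≤ 0 := by
  have hmem := (hP f).1
  have hmin := (hP f).2
  have : Nonempty K := hne.to_subtype
  have heq : ‖f - P f‖ = ⨅ w : K, ‖f - w‖ := by
    apply le_antisymm
    · apply le_ciInf
      intro w
      rw [norm_sub_rev, norm_sub_rev f w]
      exact hmin w w.2
    · exact ciInf_le ⟨0, fun x ⟨w, hw⟩ => hw ▸ norm_nonneg _⟩ (⟨P f, hmem⟩ : K)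
  exact (norm_eq_iInf_iff_real_inner_le_zero hconv hmem).mp heq

/-- The projection is nonexpansive. -/
lemma proj_nonexpansive {H : Type*} [NormedAddCommGroup H] [InnerProductSpace ℝ H]
    (K : Set H) (hne : K.Nonempty) (hconv : Convex ℝ K)
    (P : H → H) (hP : ∀ f : H, P f ∈ K ∧ ∀ v ∈ K, ‖P f - f‖ ≤ ‖v - f‖)
    (x y : H) : ‖P x - P y‖ ≤ ‖x - y‖ := by
  have e1 : ⟪x - P x, P y - P x⟫ ≤ 0 :=
    proj_var_ineq K hne hconv P hP x (P y) (hP y).1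
  have e2 : ⟪y - P y, P x - P y⟫ ≤ 0 :=
    proj_var_ineq K hne hconv P hP y (P x) (hP x).1
  have key : ‖P x - P y‖ ^ 2 ≤ ⟪x - y, P x - P y⟫ := by
    have hsum := add_nonpos e1 e2
    have expand : ⟪x - P x, P y - P x⟫ + ⟪y - P y, P x - P y⟫
        = -⟪x - y, P x - P y⟫ + ‖P x - P y‖ ^ 2 := by
      rw [show (P y - P x : H) = -(P x - P y) by abel, inner_neg_right,
        ← @real_inner_self_eq_norm_sq]
      rw [show (x - P x : H) = (x - y) - (P x - P y) + (y - P y) by abel,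
        inner_sub_left, inner_add_left]
      simp only [inner_sub_left]
      ring
    linarith [expand ▸ hsum]
  have cs : ⟪x - y, P x - P y⟫ ≤ ‖x - y‖ * ‖P x - P y‖ := real_inner_le_norm _ _
  rcases eq_or_lt_of_le (norm_nonneg (P x - P y)) with h | h
  · rw [← h]; exact norm_nonneg _
  · nlinarith [key, cs]

/-- The contraction-mapping step of the Lions–Stampacchia theorem: for
`0 < ρ < 2α/M²` the map `T(v) = P_K(v - ρ(Av - f))` is a strict contraction on `K`. -/
theorem lions_stampacchia_contraction
    {H : Type*} [NormedAddCommGroup H] [InnerProductSpace ℝ H] [CompleteSpace H]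
    (K : Set H) (hne : K.Nonempty) (hcl : IsClosed K) (hconv : Convex ℝ K)
    (P : H → H)
    (hP : ∀ f : H, P f ∈ K ∧ ∀ v ∈ K, ‖P f - f‖ ≤ ‖v - f‖)
    (A : H →L[ℝ] H) (α M : ℝ) (hα : 0 < α) (hM : 0 < M)
    (hcoer : ∀ v : H, α * ‖v‖ ^ 2 ≤ ⟪A v, v⟫)
    (hbound : ∀ v : H, ‖A v‖ ≤ M * ‖v‖)
    (f : H) (ρ : ℝ) (hρ0 : 0 < ρ) (hρ : ρ < 2 * α / M ^ 2) :
    let T : H → H := fun v => P (v - ρ • (A v - f))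
    (∀ v ∈ K, T v ∈ K) ∧
    ∃ k : ℝ, 0 ≤ k ∧ k < 1 ∧ ∀ v ∈ K, ∀ w ∈ K, ‖T v - T w‖ ≤ k * ‖v - w‖ := by
  intro T
  constructor
  · intro v _; exact (hP _).1
  · set c : ℝ := 1 - 2 * ρ * α + ρ ^ 2 * M ^ 2 with hc
    have hc1 : c < 1 := by
      have h := (lt_div_iff₀ (by positivity : (0:ℝ) < M ^ 2)).mp hρ
      nlinarith
    refine ⟨Real.sqrt (max c 0), Real.sqrt_nonneg _, ?_, ?_⟩
    · calc Real.sqrt (max c 0) < Real.sqrt 1 :=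
            Real.sqrt_lt_sqrt (le_max_right _ _) (max_lt hc1 one_pos)
        _ = 1 := Real.sqrt_one
    · intro v _ w _
      have hT : ‖T v - T w‖ ≤ ‖(v - ρ • (A v - f)) - (w - ρ • (A w - f))‖ :=
        proj_nonexpansive K hne hconv P hP _ _
      have harg : (v - ρ • (A v - f)) - (w - ρ • (A w - f))
          = (v - w) - ρ • A (v - w) := by
        rw [map_sub]; module
      set u := v - w with hu
      have hsq : ‖u - ρ • A u‖ ^ 2 ≤ c * ‖u‖ ^ 2 := by
        have expand : ‖u - ρ • A u‖ ^ 2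
            = ‖u‖ ^ 2 - 2 * ρ * ⟪A u, u⟫ + ρ ^ 2 * ‖A u‖ ^ 2 := by
          rw [@norm_sub_sq_real, real_inner_smul_right, norm_smul,
            real_inner_comm]
          simp [mul_pow, abs_of_pos hρ0]
          ring
        have h1 := hcoer u
        have h2 := hbound u
        have h3 : ‖A u‖ ^ 2 ≤ M ^ 2 * ‖u‖ ^ 2 := by
          nlinarith [norm_nonneg (A u), norm_nonneg u]
        rw [expand, hc]
        nlinarith
      have hfinal : ‖T v - T w‖ ^ 2 ≤ (Real.sqrt (max c 0) * ‖u‖) ^ 2 := by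
        have : (Real.sqrt (max c 0)) ^ 2 = max c 0 :=
          Real.sq_sqrt (le_max_right _ _)
        rw [mul_pow, this]
        calc ‖T v - T w‖ ^ 2 ≤ ‖u - ρ • A u‖ ^ 2 := by
              rw [← harg] at *
              exact pow_le_pow_left₀ (norm_nonneg _) hT 2
          _ ≤ c * ‖u‖ ^ 2 := hsq
          _ ≤ max c 0 * ‖u‖ ^ 2 := by
              exact mul_le_mul_of_nonneg_right (le_max_left _ _) (by positivity)
      have h2 := Real.sqrt_le_sqrt hfinal
      rwa [Real.sqrt_sq (norm_nonneg _), Real.sqrt_sq (by positivity)] at h2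
end
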